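/- Let C ∈ ℝ^{n_1×⋯×n_m} be an entrywise nonnegative cost tensor, η > 0, and r_k ∈ Δ^{n_k} for k = 1,…,m. Let P_η be a minimizer of V_C^η over B(r_1,…,r_m) and let P* be a minimizer of ⟨C, ·⟩ over B(r_1,…,r_m). Then ⟨C, P_η⟩ − ⟨C, P*⟩ ≤ η ( H(P_η) − H(P*) ) ≤ η Σ_{k=1}^m log(n_k). -/

import Mathlib

open Finset

namespace MOT

/-- The index set of a tensor with mode sizes `n 0, …, n (m-1)`. -/
abbrev Idx {m : ℕ} (n : Fin m → ℕ) := ∀ k : Fin m, Fin (n k)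

/-- A real tensor of order `m` with mode sizes `n k`. -/
abbrev Tensor {m : ℕ} (n : Fin m → ℕ) := Idx n → ℝ

/-- The `k`-th marginal of a tensor: `(r_k(X))_j = ∑_{I : i_k = j} X_I`. -/
noncomputable def marginal {m : ℕ} {n : Fin m → ℕ} (X : Tensor n) (k : Fin m)
    (j : Fin (n k)) : ℝ :=
  ∑ I : Idx n, if I k = j then X I else 0

/-- The entrywise ℓ¹-norm of a tensor. -/
noncomputable def tnorm1 {m : ℕ} {n : Fin m → ℕ} (X : Tensor n) : ℝ :=
  ∑ I : Idx n, |X I|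

/-- The uniform norm (maximum absolute entry) of a real-valued family. -/
noncomputable def supAbs {ι : Type*} (X : ι → ℝ) : ℝ := ⨆ i, |X i|

/-- The ℓ¹-norm of a vector. -/
noncomputable def vnorm1 {N : ℕ} (v : Fin N → ℝ) : ℝ := ∑ j, |v j|

/-- The Euclidean norm of a vector. -/
noncomputable def vnorm2 {N : ℕ} (v : Fin N → ℝ) : ℝ := Real.sqrt (∑ j, v j ^ 2)

/-- The Euclidean inner product of two vectors. -/
noncomputable def vinner {N : ℕ} (v w : Fin N → ℝ) : ℝ := ∑ j, v j * w j

/-- `v ∈ Δ^N`: entrywise strictly positive with entries summing to 1. -/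
def IsSimplex {N : ℕ} (v : Fin N → ℝ) : Prop := (∀ j, 0 < v j) ∧ ∑ j, v j = 1

/-- `P ∈ B(r_1,…,r_m)`: entrywise nonnegative with prescribed marginals. -/
def Feasible {m : ℕ} {n : Fin m → ℕ} (r : ∀ k : Fin m, Fin (n k) → ℝ)
    (P : Tensor n) : Prop :=
  (∀ I, 0 ≤ P I) ∧ ∀ k j, marginal P k j = r k j

/-- The entropy `H(P) = -∑_I P_I log P_I` (with `0 · log 0 = 0`). -/
noncomputable def entropy {m : ℕ} {n : Fin m → ℕ} (P : Tensor n) : ℝ :=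
  -∑ I : Idx n, P I * Real.log (P I)

/-- The inner product `⟨X, Y⟩ = ∑_I X_I Y_I` of two tensors. -/
noncomputable def tinner {m : ℕ} {n : Fin m → ℕ} (X Y : Tensor n) : ℝ :=
  ∑ I : Idx n, X I * Y I

/-- The entropic transport cost `V_C^η(P) = ⟨C, P⟩ − η H(P)`. -/
noncomputable def entCost {m : ℕ} {n : Fin m → ℕ} (C : Tensor n) (η : ℝ)
    (P : Tensor n) : ℝ :=
  tinner C P - η * entropy P

/-- `P` is a positive diagonal scaling of `K`. -/
def IsScaling {m : ℕ} {n : Fin m → ℕ} (K P : Tensor n) : Prop :=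
  ∃ β : ∀ k : Fin m, Fin (n k) → ℝ, ∀ I, P I = K I * ∏ k, Real.exp (β k (I k))

end MOT

/-!
The first inequality is the optimality of `P_η` for `V_C^η` tested against the feasible `P*`.
For the second, every feasible tensor is a probability distribution on the index set, so its
entropy lies between `0` and the log of the number of indices, `∑ₖ log nₖ`; the upper bound is
Jensen's inequality for the concave function `x ↦ -x log x` against uniform weights.
-/

open Real

namespace MOT

section ProbabilityVector

variable {ι : Type*} [Fintype ι] {p : ι → ℝ}

theorem sum_negMulLog_nonneg (hp : ∀ i, 0 ≤ p i) (hsum : ∑ i, p i = 1) :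
    0 ≤ ∑ i, negMulLog (p i) :=
  sum_nonneg fun i _ ↦ negMulLog_nonneg (hp i) <|
    hsum ▸ single_le_sum (fun j _ ↦ hp j) (mem_univ i)

theorem sum_negMulLog_le_log_card (hp : ∀ i, 0 ≤ p i) (hsum : ∑ i, p i = 1) :
    ∑ i, negMulLog (p i) ≤ log (Fintype.card ι) := by
  have : Nonempty ι := univ_nonempty_iff.mp (nonempty_of_sum_ne_zero (hsum ▸ one_ne_zero))
  have hN : (0 : ℝ) < Fintype.card ι := by exact_mod_cast Fintype.card_pos
  set N : ℝ := (Fintype.card ι : ℝ)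
  have jensen := concaveOn_negMulLog.le_map_sum (t := univ) (w := fun _ ↦ N⁻¹) (p := p)
    (fun _ _ ↦ by positivity) (by simp [N, hN.ne']) (fun i _ ↦ Set.mem_Ici.mpr (hp i))
  rw [← smul_sum, ← smul_sum, hsum, smul_eq_mul, smul_eq_mul, mul_one] at jensen
  have hrhs : negMulLog N⁻¹ = N⁻¹ * log N := by simp [negMulLog, log_inv]
  exact le_of_mul_le_mul_left (jensen.trans_eq hrhs) (inv_pos.mpr hN)

end ProbabilityVector

variable {m : ℕ} {n : Fin m → ℕ}

theorem sum_marginal (X : Tensor n) (k : Fin m) : ∑ j, marginal X k j = ∑ I, X I := by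
  unfold marginal
  rw [sum_comm]
  simp

theorem Feasible.sum_eq_one {r : ∀ k : Fin m, Fin (n k) → ℝ} {P : Tensor n}
    (hP : Feasible r P) (k : Fin m) (hrk : ∑ j, r k j = 1) : ∑ I, P I = 1 := by
  rw [← sum_marginal P k, ← hrk]
  exact sum_congr rfl fun j _ ↦ hP.2 k j

theorem entropy_eq_sum_negMulLog (P : Tensor n) : entropy P = ∑ I, negMulLog (P I) := by
  simp [entropy, negMulLog]

theorem log_card_idx [Nonempty (Idx n)] : log (Fintype.card (Idx n)) = ∑ k, log (n k) := by
  obtain ⟨I⟩ := ‹Nonempty (Idx n)›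
  rw [Fintype.card_pi, Nat.cast_prod, log_prod]
  · simp
  · intro k _
    simpa using (I k).pos.ne'

theorem entropy_nonneg {P : Tensor n} (hP : ∀ I, 0 ≤ P I) (hsum : ∑ I, P I = 1) :
    0 ≤ entropy P :=
  entropy_eq_sum_negMulLog P ▸ sum_negMulLog_nonneg hP hsum

theorem entropy_le_sum_log {P : Tensor n} (hP : ∀ I, 0 ≤ P I) (hsum : ∑ I, P I = 1) :
    entropy P ≤ ∑ k, log (n k) := by
  have : Nonempty (Idx n) := univ_nonempty_iff.mp (nonempty_of_sum_ne_zero (hsum ▸ one_ne_zero))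
  rw [entropy_eq_sum_negMulLog, ← log_card_idx]
  exact sum_negMulLog_le_log_card hP hsum

theorem entropic_minimizer_cost_gap_general
    {m : ℕ} (hm : 2 ≤ m) {n : Fin m → ℕ}
    (C : Tensor n)
    (η : ℝ) (hη : 0 < η)
    (r : ∀ k : Fin m, Fin (n k) → ℝ) (hr : ∀ k, IsSimplex (r k))
    (Pη : Tensor n) (hPηF : Feasible r Pη)
    (hPηMin : ∀ Q : Tensor n, Feasible r Q → entCost C η Pη ≤ entCost C η Q)
    (Pstar : Tensor n) (hPstarF : Feasible r Pstar) :
    tinner C Pη - tinner C Pstar ≤ η * (entropy Pη - entropy Pstar) ∧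
    η * (entropy Pη - entropy Pstar) ≤ η * ∑ k, Real.log (n k : ℝ) := by
  have k₀ : Fin m := ⟨0, by omega⟩
  have hPη_le := entropy_le_sum_log hPηF.1 (hPηF.sum_eq_one k₀ (hr k₀).2)
  have hPstar_nonneg := entropy_nonneg hPstarF.1 (hPstarF.sum_eq_one k₀ (hr k₀).2)
  constructor
  · have := hPηMin Pstar hPstarF
    unfold entCost at this
    linarith
  · exact mul_le_mul_of_nonneg_left (by linarith) hη.le

/-- inequality `(eq:thm2boundetastarstar)` in the proof of Theorem
`thm:EpsAccurateApprox`: the entropic minimizer `P_η` and the unregularized minimizer `P*`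
satisfy `⟨C, P_η⟩ − ⟨C, P*⟩ ≤ η (H(P_η) − H(P*)) ≤ η ∑_k log n_k`. -/
theorem entropic_minimizer_cost_gap
    {m : ℕ} (hm : 2 ≤ m) {n : Fin m → ℕ}
    (C : Tensor n) (hC : ∀ I, 0 ≤ C I)
    (η : ℝ) (hη : 0 < η)
    (r : ∀ k : Fin m, Fin (n k) → ℝ) (hr : ∀ k, IsSimplex (r k))
    (Pη : Tensor n) (hPηF : Feasible r Pη)
    (hPηMin : ∀ Q : Tensor n, Feasible r Q → entCost C η Pη ≤ entCost C η Q)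
    (Pstar : Tensor n) (hPstarF : Feasible r Pstar)
    (hPstarMin : ∀ Q : Tensor n, Feasible r Q → tinner C Pstar ≤ tinner C Q) :
    tinner C Pη - tinner C Pstar ≤ η * (entropy Pη - entropy Pstar) ∧
    η * (entropy Pη - entropy Pstar) ≤ η * ∑ k, Real.log (n k : ℝ) :=
  entropic_minimizer_cost_gap_general hm C η hη r hr Pη hPηF hPηMin Pstar hPstarF

end MOT
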